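/- For an irreducible Markov chain (X,P), the spectral radius ρ(P) equals the minimum over all t > 0 such that there exists a strictly positive function f : X → ℝ with Pf(x) ≤ t·f(x) for all x ∈ X (where Pf(x) = ∑_y p(x,y) f(y)). -/

import Mathlib

/-!
If `f > 0` and `P f ≤ t f`, then `p⁽ⁿ⁾(o,o) f(o) ≤ (Pⁿ f)(o) ≤ tⁿ f(o)`, hence `ρ(P) ≤ t`.

Conversely, for `t > ρ(P)` the Green function `x ↦ ∑ₙ p⁽ⁿ⁾(x,o) t⁻ⁿ` converges (root test at `o`,
irreducibility elsewhere) and is `t`-superharmonic. Normalised at `o`, these functions satisfy the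
Harnack bounds `p⁽ᵏ⁾(x,o) / Tᵏ ≤ f(x) ≤ Tᵐ / p⁽ᵐ⁾(o,x)` uniformly in `t ≤ T`, so they lie in a
compact product of intervals, and a cluster point as `t ↓ ρ(P)` is a positive `ρ(P)`-superharmonic
function. Testing superharmonicity on finite partial sums makes it a closed condition.
-/

open Filter
open scoped Classical

/-- `n`-step transition probabilities of a kernel `q` on a countable state space. -/
noncomputable def kpow {X : Type*} (q : X → X → ℝ) : ℕ → X → X → ℝ
  | 0, x, y => if x = y then 1 else 0
  | n + 1, x, y => ∑' z : X, q x z * kpow q n z y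

/-- The spectral radius `ρ(P) = limsup_n (p^{(n)}(x,x))^{1/n}` (computed at base point `x`). -/
noncomputable def specRad {X : Type*} (q : X → X → ℝ) (x : X) : ℝ :=
  Filter.atTop.limsup fun n : ℕ => (kpow q n x x) ^ ((n : ℝ)⁻¹)

open scoped Topology

section

variable {X : Type*} {p : X → X → ℝ}

def IsSuperharmonic (p : X → X → ℝ) (t : ℝ) (f : X → ℝ) : Prop :=
  (∀ x, Summable fun y => p x y * f y) ∧ ∀ x, ∑' y, p x y * f y ≤ t * f x

section Kernel

variable (hp : ∀ x y, 0 ≤ p x y)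
include hp

theorem kpow_nonneg (n : ℕ) (x y : X) : 0 ≤ kpow p n x y := by
  induction n generalizing x with
  | zero => unfold kpow; split_ifs <;> norm_num
  | succ n ih => exact tsum_nonneg fun z => mul_nonneg (hp x z) (ih z)

variable (hstoch : ∀ x, HasSum (p x) 1)
include hstoch

theorem summable_mul_of_le_one (x : X) {g : X → ℝ} (hg₀ : 0 ≤ g) (hg₁ : g ≤ 1) :
    Summable fun z => p x z * g z :=
  (hstoch x).summable.of_nonneg_of_le (fun z => mul_nonneg (hp x z) (hg₀ z))
    fun z => mul_le_of_le_one_right (hp x z) (hg₁ z)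

theorem kpow_le_one (n : ℕ) (x y : X) : kpow p n x y ≤ 1 := by
  induction n generalizing x with
  | zero => unfold kpow; split_ifs <;> norm_num
  | succ n ih =>
    calc kpow p (n + 1) x y = ∑' z, p x z * kpow p n z y := rfl
      _ ≤ ∑' z, p x z :=
        (summable_mul_of_le_one hp hstoch x (fun z => kpow_nonneg hp n z y) ih).tsum_le_tsum
          (fun z => mul_le_of_le_one_right (hp x z) (ih z)) (hstoch x).summable
      _ = 1 := (hstoch x).tsum_eq

theorem summable_mul_kpow (n : ℕ) (x y : X) : Summable fun z => p x z * kpow p n z y :=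
  summable_mul_of_le_one hp hstoch x (fun z => kpow_nonneg hp n z y)
    fun z => kpow_le_one hp hstoch n z y

theorem kpow_mul_kpow_le (m n : ℕ) (x y z : X) :
    kpow p m x y * kpow p n y z ≤ kpow p (m + n) x z := by
  induction m generalizing x with
  | zero =>
    by_cases hxy : x = y
    · subst hxy; simp [kpow]
    · simp [kpow, hxy, kpow_nonneg hp]
  | succ m ih =>
    rw [show m + 1 + n = m + n + 1 by omega]
    calc kpow p (m + 1) x y * kpow p n y z = ∑' w, p x w * kpow p m w y * kpow p n y z := by
          rw [kpow, ← tsum_mul_right]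
      _ ≤ ∑' w, p x w * kpow p (m + n) w z :=
        ((summable_mul_kpow hp hstoch m x y).mul_right _).tsum_le_tsum
          (fun w => by rw [mul_assoc]; exact mul_le_mul_of_nonneg_left (ih w) (hp x w))
          (summable_mul_kpow hp hstoch (m + n) x z)
      _ = kpow p (m + n + 1) x z := rfl

theorem kpow_pow_le_kpow_mul (m n : ℕ) (x : X) : kpow p m x x ^ n ≤ kpow p (n * m) x x := by
  induction n with
  | zero => simp [kpow]
  | succ n ih =>
    calc kpow p m x x ^ (n + 1) = kpow p m x x ^ n * kpow p m x x := pow_succ _ _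
      _ ≤ kpow p (n * m) x x * kpow p m x x := by gcongr; exact kpow_nonneg hp m x x
      _ ≤ kpow p ((n + 1) * m) x x := by
        rw [Nat.succ_mul]; exact kpow_mul_kpow_le hp hstoch _ _ x x x

end Kernel

namespace IsSuperharmonic

variable {t : ℝ} {f : X → ℝ}

theorem mono (hf : IsSuperharmonic p t f) (hf₀ : 0 ≤ f) {t' : ℝ} (ht : t ≤ t') :
    IsSuperharmonic p t' f :=
  ⟨hf.1, fun x => (hf.2 x).trans (mul_le_mul_of_nonneg_right ht (hf₀ x))⟩

theorem const_mul (hf : IsSuperharmonic p t f) {c : ℝ} (hc : 0 ≤ c) :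
    IsSuperharmonic p t fun x => c * f x := by
  refine ⟨fun x => ?_, fun x => ?_⟩
  · simpa only [mul_left_comm] using (hf.1 x).mul_left c
  · simp only [mul_left_comm _ c, tsum_mul_left]
    exact mul_le_mul_of_nonneg_left (hf.2 x) hc

end IsSuperharmonic

theorem isSuperharmonic_iff_sum_le (hp : ∀ x y, 0 ≤ p x y) {t : ℝ} {f : X → ℝ} (hf₀ : 0 ≤ f) :
    IsSuperharmonic p t f ↔ ∀ x (s : Finset X), ∑ y ∈ s, p x y * f y ≤ t * f x := by
  have hterm : ∀ x y, 0 ≤ p x y * f y := fun x y => mul_nonneg (hp x y) (hf₀ y)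
  refine ⟨fun hf x s => ((hf.1 x).sum_le_tsum s fun y _ => hterm x y).trans (hf.2 x),
    fun h => ?_⟩
  have hsum : ∀ x, Summable fun y => p x y * f y := fun x => summable_of_sum_le (hterm x) (h x)
  exact ⟨hsum, fun x => (hsum x).tsum_le_of_sum_le (h x)⟩

theorem isClosed_setOf_isSuperharmonic (hp : ∀ x y, 0 ≤ p x y) (t : ℝ) :
    IsClosed {f : X → ℝ | 0 ≤ f ∧ IsSuperharmonic p t f} := by
  have : {f : X → ℝ | 0 ≤ f ∧ IsSuperharmonic p t f} =
      {f | 0 ≤ f} ∩ ⋂ x, ⋂ s : Finset X, {f | ∑ y ∈ s, p x y * f y ≤ t * f x} := by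
    ext f
    simp only [Set.mem_ofPred_eq, Set.mem_inter_iff, Set.mem_iInter]
    exact and_congr_right fun hf₀ => isSuperharmonic_iff_sum_le hp hf₀
  rw [this]
  refine (isClosed_le continuous_const continuous_id).inter
    (isClosed_iInter fun x => isClosed_iInter fun s => isClosed_le ?_ ?_) <;> fun_prop

theorem IsSuperharmonic.of_forall_lt {t : ℝ} {f : X → ℝ}
    (hf : ∀ t', t < t' → IsSuperharmonic p t' f) : IsSuperharmonic p t f := by
  refine ⟨(hf (t + 1) (lt_add_one t)).1, fun x => ?_⟩
  refine ge_of_tendsto (x := 𝓝[>] t) ?_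
    (eventually_nhdsWithin_of_forall fun t' ht' => (hf t' ht').2 x)
  exact ((continuous_id.mul continuous_const).tendsto' t _ rfl).mono_left nhdsWithin_le_nhds

theorem IsSuperharmonic.kpow_mul_le (hp : ∀ x y, 0 ≤ p x y) (hstoch : ∀ x, HasSum (p x) 1)
    {t : ℝ} {f : X → ℝ} (hf : IsSuperharmonic p t f) (hf₀ : 0 ≤ f) (ht : 0 ≤ t)
    (n : ℕ) (x y : X) : kpow p n x y * f y ≤ t ^ n * f x := by
  induction n generalizing x with
  | zero =>
    by_cases hxy : x = y
    · subst hxy; simp [kpow]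
    · simpa [kpow, hxy] using hf₀ x
  | succ n ih =>
    calc kpow p (n + 1) x y * f y = ∑' z, p x z * kpow p n z y * f y := by
          rw [kpow, ← tsum_mul_right]
      _ ≤ ∑' z, t ^ n * (p x z * f z) :=
        ((summable_mul_kpow hp hstoch n x y).mul_right _).tsum_le_tsum
          (fun z => by
            rw [mul_assoc, mul_left_comm (t ^ n)]
            exact mul_le_mul_of_nonneg_left (ih z) (hp x z))
          ((hf.1 x).mul_left _)
      _ ≤ t ^ (n + 1) * f x := by
        rw [tsum_mul_left, pow_succ, mul_assoc]
        exact mul_le_mul_of_nonneg_left (hf.2 x) (pow_nonneg ht n)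

section SpectralRadius

variable (hp : ∀ x y, 0 ≤ p x y) (hstoch : ∀ x, HasSum (p x) 1) (o : X)
include hp

theorem isCoboundedUnder_le_kpow_rpow :
    IsCoboundedUnder (· ≤ ·) atTop fun n : ℕ => kpow p n o o ^ (n : ℝ)⁻¹ :=
  isCoboundedUnder_le_of_le atTop fun n => Real.rpow_nonneg (kpow_nonneg hp n o o) _

theorem specRad_le_of_kpow_le {t : ℝ} (ht : 0 ≤ t) (h : ∀ n, kpow p n o o ≤ t ^ n) :
    specRad p o ≤ t := by
  refine limsup_le_of_le (isCoboundedUnder_le_kpow_rpow hp o) ?_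
  filter_upwards [eventually_ne_atTop 0] with n hn
  calc kpow p n o o ^ (n : ℝ)⁻¹ ≤ (t ^ n) ^ (n : ℝ)⁻¹ := by
        gcongr
        · exact kpow_nonneg hp n o o
        · exact h n
    _ = t := Real.pow_rpow_inv_natCast ht hn

include hstoch

theorem isBoundedUnder_le_kpow_rpow :
    IsBoundedUnder (· ≤ ·) atTop fun n : ℕ => kpow p n o o ^ (n : ℝ)⁻¹ :=
  isBoundedUnder_of ⟨1, fun n =>
    Real.rpow_le_one (kpow_nonneg hp n o o) (kpow_le_one hp hstoch n o o) (by positivity)⟩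

theorem rpow_inv_le_specRad {m : ℕ} (hm : m ≠ 0) : kpow p m o o ^ (m : ℝ)⁻¹ ≤ specRad p o := by
  refine le_limsup_of_frequently_le ?_ (isBoundedUnder_le_kpow_rpow hp hstoch o)
  have hmul : Tendsto (fun n : ℕ => (n + 1) * m) atTop atTop :=
    tendsto_atTop_mono
      (fun n => n.le_succ.trans (Nat.le_mul_of_pos_right _ (Nat.pos_of_ne_zero hm))) tendsto_id
  refine hmul.frequently (Frequently.of_forall fun n => ?_)
  have hc := kpow_nonneg hp m o o
  calc kpow p m o o ^ (m : ℝ)⁻¹ = (kpow p m o o ^ (n + 1)) ^ (((n + 1) * m : ℕ) : ℝ)⁻¹ := by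
        rw [← Real.rpow_natCast, ← Real.rpow_mul hc]
        congr 1
        push_cast
        field_simp
    _ ≤ kpow p ((n + 1) * m) o o ^ (((n + 1) * m : ℕ) : ℝ)⁻¹ := by
        gcongr
        exact kpow_pow_le_kpow_mul hp hstoch m (n + 1) o

theorem specRad_nonneg : 0 ≤ specRad p o :=
  (Real.rpow_nonneg (kpow_nonneg hp 1 o o) _).trans (rpow_inv_le_specRad hp hstoch o one_ne_zero)

theorem specRad_pos (hirred : ∀ x y, ∃ k : ℕ, 0 < kpow p k x y) : 0 < specRad p o := by
  obtain ⟨y, hy⟩ : ∃ y, 0 < p o y := by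
    by_contra! h
    have : p o = 0 := funext fun y => (h y).antisymm (hp o y)
    exact one_ne_zero ((hstoch o).unique (this ▸ hasSum_zero))
  obtain ⟨k, hk⟩ := hirred y o
  have hret : 0 < kpow p (1 + k) o o :=
    (mul_pos (by simpa [kpow] using hy) hk).trans_le (kpow_mul_kpow_le hp hstoch 1 k o y o)
  exact (Real.rpow_pos_of_pos hret _).trans_le (rpow_inv_le_specRad hp hstoch o (by omega))

theorem eventually_kpow_le_pow {r : ℝ} (hr : specRad p o < r) :
    ∀ᶠ n in atTop, kpow p n o o ≤ r ^ n := by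
  filter_upwards [eventually_lt_of_limsup_lt hr (isBoundedUnder_le_kpow_rpow hp hstoch o),
    eventually_ne_atTop 0] with n hn hn0
  rw [← Real.rpow_inv_natCast_pow (kpow_nonneg hp n o o) hn0]
  exact pow_le_pow_left₀ (Real.rpow_nonneg (kpow_nonneg hp n o o) _) hn.le n

end SpectralRadius

/-- The Green function `G(x, o | z) = ∑ₙ p⁽ⁿ⁾(x,o) zⁿ` at `z = 1/t`. -/
noncomputable def greenFun (p : X → X → ℝ) (o : X) (t : ℝ) (x : X) : ℝ :=
  ∑' n : ℕ, kpow p n x o / t ^ n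

section Green

variable (hp : ∀ x y, 0 ≤ p x y) (hstoch : ∀ x, HasSum (p x) 1) (o : X) {t : ℝ}
include hp hstoch

theorem summable_kpow_self_div_pow (ht : specRad p o < t) :
    Summable fun n : ℕ => kpow p n o o / t ^ n := by
  obtain ⟨r, hρr, hrt⟩ := exists_between ht
  have hr : 0 ≤ r := (specRad_nonneg hp hstoch o).trans hρr.le
  have ht₀ : 0 < t := hr.trans_lt hrt
  refine (summable_geometric_of_lt_one (div_nonneg hr ht₀.le) ((div_lt_one ht₀).2 hrt))
    |>.of_norm_bounded_eventually_nat ?_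
  filter_upwards [eventually_kpow_le_pow hp hstoch o hρr] with n hn
  rw [Real.norm_of_nonneg (div_nonneg (kpow_nonneg hp n o o) (pow_nonneg ht₀.le n)), div_pow]
  gcongr

theorem summable_kpow_div_pow (ht : specRad p o < t) {x : X} {k : ℕ} (hk : 0 < kpow p k o x) :
    Summable fun n : ℕ => kpow p n x o / t ^ n := by
  have ht₀ : 0 < t := (specRad_nonneg hp hstoch o).trans_lt ht
  have hshift := (summable_nat_add_iff k).mpr (summable_kpow_self_div_pow hp hstoch o ht)
  refine (hshift.mul_left (t ^ k / kpow p k o x)).of_nonneg_of_le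
    (fun n => div_nonneg (kpow_nonneg hp n x o) (pow_nonneg ht₀.le n)) fun n => ?_
  have := kpow_mul_kpow_le hp hstoch k n o x o
  rw [pow_add]
  field_simp
  rwa [mul_comm, add_comm]

variable (hirred : ∀ x y, ∃ k : ℕ, 0 < kpow p k x y)
include hirred

theorem summable_greenFun (ht : specRad p o < t) (x : X) :
    Summable fun n : ℕ => kpow p n x o / t ^ n :=
  summable_kpow_div_pow hp hstoch o ht (hirred o x).choose_spec

theorem greenFun_pos (ht : specRad p o < t) (x : X) : 0 < greenFun p o t x := by
  have ht₀ : 0 < t := (specRad_nonneg hp hstoch o).trans_lt ht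
  obtain ⟨k, hk⟩ := hirred x o
  exact (div_pos hk (pow_pos ht₀ k)).trans_le <|
    (summable_greenFun hp hstoch o hirred ht x).le_tsum k
      fun n _ => div_nonneg (kpow_nonneg hp n x o) (pow_nonneg ht₀.le n)

theorem isSuperharmonic_greenFun (ht : specRad p o < t) :
    IsSuperharmonic p t (greenFun p o t) := by
  have ht₀ : 0 < t := (specRad_nonneg hp hstoch o).trans_lt ht
  have hG := summable_greenFun hp hstoch o hirred ht
  have hterm : ∀ n x, 0 ≤ kpow p n x o / t ^ n := fun n x =>
    div_nonneg (kpow_nonneg hp n x o) (pow_nonneg ht₀.le n)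
  refine (isSuperharmonic_iff_sum_le hp fun x => (greenFun_pos hp hstoch o hirred ht x).le).2
    fun x s => ?_
  have htail : Summable fun n : ℕ => kpow p (n + 1) x o / t ^ (n + 1) :=
    (summable_nat_add_iff 1).mpr (hG x)
  calc ∑ y ∈ s, p x y * greenFun p o t y
      = ∑' n : ℕ, ∑ y ∈ s, p x y * (kpow p n y o / t ^ n) := by
        simp only [greenFun, ← tsum_mul_left]
        exact (Summable.tsum_finsetSum fun y _ => (hG y).mul_left _).symm
    _ ≤ ∑' n : ℕ, t * (kpow p (n + 1) x o / t ^ (n + 1)) := by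
        refine (summable_sum fun y _ => (hG y).mul_left _).tsum_le_tsum (fun n => ?_)
          (htail.mul_left t)
        calc ∑ y ∈ s, p x y * (kpow p n y o / t ^ n)
            = (∑ y ∈ s, p x y * kpow p n y o) / t ^ n := by
              rw [Finset.sum_div]; simp only [mul_div_assoc]
          _ ≤ kpow p (n + 1) x o / t ^ n := by
              gcongr
              exact (summable_mul_kpow hp hstoch n x o).sum_le_tsum s
                fun y _ => mul_nonneg (hp x y) (kpow_nonneg hp n y o)
          _ = t * (kpow p (n + 1) x o / t ^ (n + 1)) := by
              field_simp
              ring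
    _ ≤ t * greenFun p o t x := by
        rw [tsum_mul_left, greenFun, (hG x).tsum_eq_zero_add]
        exact mul_le_mul_of_nonneg_left (le_add_of_nonneg_left (hterm 0 x)) ht₀.le

end Green

theorem IsSuperharmonic.mem_Icc (hp : ∀ x y, 0 ≤ p x y) (hstoch : ∀ x, HasSum (p x) 1)
    {t T : ℝ} {f : X → ℝ} (hf : IsSuperharmonic p t f) (hf₀ : 0 ≤ f) (ht : 0 < t) (htT : t ≤ T)
    {o x : X} (hfo : f o = 1) {k m : ℕ} (hm : 0 < kpow p m o x) :
    f x ∈ Set.Icc (kpow p k x o / T ^ k) (T ^ m / kpow p m o x) := by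
  have hpow : ∀ n, t ^ n ≤ T ^ n := fun n => pow_le_pow_left₀ ht.le htT n
  have hkx := hf.kpow_mul_le hp hstoch hf₀ ht.le k x o
  have hmx := hf.kpow_mul_le hp hstoch hf₀ ht.le m o x
  rw [hfo, mul_one] at hkx hmx
  constructor
  · rw [div_le_iff₀' (pow_pos (ht.trans_le htT) k)]
    exact hkx.trans (mul_le_mul_of_nonneg_right (hpow k) (hf₀ x))
  · rw [le_div_iff₀' hm]
    exact hmx.trans (hpow m)

theorem exists_pos_isSuperharmonic_specRad (hp : ∀ x y, 0 ≤ p x y)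
    (hstoch : ∀ x, HasSum (p x) 1) (hirred : ∀ x y, ∃ k : ℕ, 0 < kpow p k x y) (o : X) :
    ∃ f : X → ℝ, (∀ x, 0 < f x) ∧ IsSuperharmonic p (specRad p o) f := by
  set ρ := specRad p o
  set F : ℝ → X → ℝ := fun t x => (greenFun p o t o)⁻¹ * greenFun p o t x
  choose k hk using fun x => hirred x o
  choose m hm using fun x => hirred o x
  have hF : ∀ t, ρ < t → 0 ≤ F t ∧ IsSuperharmonic p t (F t) ∧ F t o = 1 := fun t ht =>
    have hG := greenFun_pos hp hstoch o hirred ht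
    ⟨fun x => (mul_pos (inv_pos.2 (hG o)) (hG x)).le,
      (isSuperharmonic_greenFun hp hstoch o hirred ht).const_mul (inv_pos.2 (hG o)).le,
      inv_mul_cancel₀ (hG o).ne'⟩
  set K := Set.univ.pi fun x => Set.Icc (kpow p (k x) x o / (ρ + 1) ^ k x)
    ((ρ + 1) ^ m x / kpow p (m x) o x)
  have hFK : ∀ᶠ t in 𝓝[>] ρ, F t ∈ K := by
    filter_upwards [Ioo_mem_nhdsGT (lt_add_one ρ)] with t ht
    obtain ⟨hF₀, hFt, hFo⟩ := hF t ht.1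
    exact Set.mem_univ_pi.2 fun x => hFt.mem_Icc hp hstoch hF₀
      ((specRad_nonneg hp hstoch o).trans_lt ht.1) ht.2.le hFo (hm x)
  obtain ⟨g, hgK, hg⟩ :=
    (isCompact_univ_pi fun x => isCompact_Icc).exists_mapClusterPt_of_frequently hFK.frequently
  have hg₀ : ∀ x, 0 < g x := fun x =>
    (div_pos (hk x) (pow_pos (by linarith [specRad_nonneg hp hstoch o]) _)).trans_le
      (Set.mem_univ_pi.1 hgK x).1
  refine ⟨g, hg₀, IsSuperharmonic.of_forall_lt fun t' ht' => ?_⟩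
  refine ((isClosed_setOf_isSuperharmonic hp t').mem_of_mapClusterPt hg ?_).2
  filter_upwards [Ioo_mem_nhdsGT ht'] with t ht
  obtain ⟨hF₀, hFt, -⟩ := hF t ht.1
  exact ⟨hF₀, hFt.mono hF₀ ht.2.le⟩

theorem specRad_le_of_isSuperharmonic (hp : ∀ x y, 0 ≤ p x y) (hstoch : ∀ x, HasSum (p x) 1)
    (o : X) {t : ℝ} (ht : 0 ≤ t) {f : X → ℝ} (hf₀ : ∀ x, 0 < f x) (hf : IsSuperharmonic p t f) :
    specRad p o ≤ t :=
  specRad_le_of_kpow_le hp o ht fun n => le_of_mul_le_mul_right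
    (hf.kpow_mul_le hp hstoch (fun x => (hf₀ x).le) ht n o o) (hf₀ o)

end

theorem specRad_eq_min_superharmonic_general
    {X : Type*} (p : X → X → ℝ)
    (hnonneg : ∀ x y, 0 ≤ p x y)
    (hstoch : ∀ x, HasSum (p x) 1)
    (hirred : ∀ x y, ∃ k : ℕ, 0 < kpow p k x y) :
    ∀ o : X,
      IsLeast {t : ℝ | 0 < t ∧ ∃ f : X → ℝ, (∀ x, 0 < f x) ∧
          (∀ x, Summable fun y => p x y * f y) ∧
          (∀ x, (∑' y : X, p x y * f y) ≤ t * f x)}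
        (specRad p o) := by
  intro o
  obtain ⟨f, hf₀, hf⟩ := exists_pos_isSuperharmonic_specRad hnonneg hstoch hirred o
  refine ⟨⟨specRad_pos hnonneg hstoch o hirred, f, hf₀, hf⟩, ?_⟩
  rintro t ⟨ht, f, hf₀, hf⟩
  exact specRad_le_of_isSuperharmonic hnonneg hstoch o ht.le hf₀ hf

/-- `ρ(P)` is the least `t > 0` admitting a strictly positive
`t`-superharmonic function. -/
theorem specRad_eq_min_superharmonic
    {X : Type*} [Countable X] (p : X → X → ℝ)
    (hnonneg : ∀ x y, 0 ≤ p x y)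
    (hstoch : ∀ x, HasSum (p x) 1)
    (hirred : ∀ x y, ∃ k : ℕ, 0 < kpow p k x y) :
    ∀ o : X,
      IsLeast {t : ℝ | 0 < t ∧ ∃ f : X → ℝ, (∀ x, 0 < f x) ∧
          (∀ x, Summable fun y => p x y * f y) ∧
          (∀ x, (∑' y : X, p x y * f y) ≤ t * f x)}
        (specRad p o) :=
  specRad_eq_min_superharmonic_general p hnonneg hstoch hirred
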